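/- arXiv:0903.3071 — 6 statements merged into one kernel-verified Lean document; each statement's English description precedes it below -/
import Mathlib

section
/- For all x > 0, the inequality [ψ'(x)]² + ψ''(x) > 0 holds, where ψ is the digamma function. -/
/-!
Termwise differentiation of `∑ₖ (1/(1+k) - 1/(x+k))`, which agrees with `ψ` up to a constant
because both are monotone with increments `ψ(x+1) - ψ(x) = 1/x`, gives
`ψ' = ζ(2, ·)` and `ψ'' = -2 ζ(3, ·)` with `ζ(n, x) = ∑ₖ (x+k)⁻ⁿ`.
For `Q = ζ(2, ·)² - 2 ζ(3, ·)` the recurrences `ζ(n, x) = x⁻ⁿ + ζ(n, x+1)` give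
`Q(x) - Q(x+1) = (2/x²) (ζ(2, x+1) - 1/x + 1/(2x²))`, which is positive by the telescoping bound
`ζ(2, y) ≥ 1/y + 1/(2y²)`. As `Q(x+n) → 0`, `Q(x) > Q(x+1) ≥ 0`.
-/

noncomputable def psi : ℝ → ℝ := deriv (fun x => Real.log (Real.Gamma x))

open Real Filter Set Topology

lemma Antitone.hasSum_sub_succ {f : ℕ → ℝ} {l : ℝ} (hf : Antitone f)
    (hl : Tendsto f atTop (𝓝 l)) : HasSum (fun k => f k - f (k + 1)) (f 0 - l) := by
  rw [hasSum_iff_tendsto_nat_of_nonneg fun k => sub_nonneg.2 (hf k.le_succ)]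
  simp only [Finset.sum_range_sub']
  exact tendsto_const_nhds.sub (hl.comp (tendsto_add_atTop_nat 0))

lemma nonneg_of_map_add_one_le {f : ℝ → ℝ} {x : ℝ} (hx : 0 < x)
    (hf : ∀ y, 0 < y → f (y + 1) ≤ f y)
    (hlim : Tendsto (fun n : ℕ => f (x + n)) atTop (𝓝 0)) : 0 ≤ f x := by
  have hanti : Antitone fun n : ℕ => f (x + n) := antitone_nat_of_succ_le fun n => by
    simpa [add_assoc] using hf (x + n) (by positivity)
  simpa using hanti.le_of_tendsto hlim 0

lemma tendsto_add_natCast_atTop (x : ℝ) : Tendsto (fun n : ℕ => x + n) atTop atTop :=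
  tendsto_atTop_add_const_left _ _ tendsto_natCast_atTop_atTop

section Recurrence

variable {f g r : ℝ → ℝ}

lemma sub_map_add_nat (hfr : ∀ x, 0 < x → f (x + 1) = f x + r x)
    (hgr : ∀ x, 0 < x → g (x + 1) = g x + r x) {x : ℝ} (hx : 0 < x) (n : ℕ) :
    f (x + n) - g (x + n) = f x - g x := by
  induction n with
  | zero => simp
  | succ n ih =>
    have hxn : 0 < x + n := by positivity
    rw [Nat.cast_succ, ← add_assoc, hfr _ hxn, hgr _ hxn]
    linarith

lemma tendsto_map_add_nat_add_sub (hgr : ∀ x, 0 < x → g (x + 1) = g x + r x)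
    (hr : Tendsto r atTop (𝓝 0)) {x : ℝ} (hx : 0 < x) (M : ℕ) :
    Tendsto (fun n : ℕ => g (x + n + M) - g (x + n)) atTop (𝓝 0) := by
  induction M with
  | zero => simp
  | succ M ih =>
    have hrM : Tendsto (fun n : ℕ => r (x + n + M)) atTop (𝓝 0) :=
      hr.comp (tendsto_atTop_add_const_right _ _ (tendsto_add_natCast_atTop x))
    refine Tendsto.congr (fun n => ?_) (by simpa using ih.add hrM)
    rw [Nat.cast_succ, ← add_assoc, hgr _ (by positivity)]
    ring

-- `f - g` is `1`-periodic, and by monotonicity `f (x + n) - g (x + n)` exceeds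
-- `f (y + N + n) - g (y + N + n)` by at most `g (x + n + M) - g (x + n) → 0`.
lemma sub_le_sub_of_monotoneOn (hf : MonotoneOn f (Ioi 0)) (hg : MonotoneOn g (Ioi 0))
    (hfr : ∀ x, 0 < x → f (x + 1) = f x + r x) (hgr : ∀ x, 0 < x → g (x + 1) = g x + r x)
    (hr : Tendsto r atTop (𝓝 0)) {x y : ℝ} (hx : 0 < x) (hy : 0 < y) :
    f x - g x ≤ f y - g y := by
  set N := ⌈x⌉₊
  set M := ⌈y⌉₊ + N
  have hxN : x ≤ y + N := by linarith [Nat.le_ceil x]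
  have hyN : y + N ≤ x + M := by push_cast [M]; linarith [Nat.le_ceil y]
  refine le_of_tendsto_of_tendsto' tendsto_const_nhds
    (by simpa using (tendsto_map_add_nat_add_sub hgr hr hx M).const_add (f y - g y)) fun n => ?_
  rw [← sub_map_add_nat hfr hgr hx n, ← sub_map_add_nat hfr hgr hy (N + n)]
  have hf' : f (x + n) ≤ f (y + ↑(N + n)) :=
    hf (by simp only [mem_Ioi]; positivity) (by simp only [mem_Ioi]; positivity)
      (by push_cast; linarith)
  have hg' : g (y + ↑(N + n)) ≤ g (x + n + M) :=
    hg (by simp only [mem_Ioi]; positivity) (by simp only [mem_Ioi]; positivity)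
      (by push_cast; linarith)
  linarith

lemma sub_eq_sub_of_monotoneOn (hf : MonotoneOn f (Ioi 0)) (hg : MonotoneOn g (Ioi 0))
    (hfr : ∀ x, 0 < x → f (x + 1) = f x + r x) (hgr : ∀ x, 0 < x → g (x + 1) = g x + r x)
    (hr : Tendsto r atTop (𝓝 0)) {x y : ℝ} (hx : 0 < x) (hy : 0 < y) :
    f x - g x = f y - g y :=
  le_antisymm (sub_le_sub_of_monotoneOn hf hg hfr hgr hr hx hy)
    (sub_le_sub_of_monotoneOn hf hg hfr hgr hr hy hx)

end Recurrence

lemma hasDerivAt_one_div_add_pow (n : ℕ) {a z : ℝ} (hz : 0 < z + a) :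
    HasDerivAt (fun y => 1 / (y + a) ^ n) (-n * (1 / (z + a) ^ (n + 1))) z := by
  have h := (hasDerivAt_zpow (-(n : ℤ)) (z + a) (Or.inl hz.ne')).comp_add_const z a
  simp only [zpow_neg, zpow_natCast, ← one_div] at h
  refine h.congr_deriv ?_
  rw [show -(n : ℤ) - 1 = -((n + 1 : ℕ) : ℤ) by push_cast; ring, zpow_neg, zpow_natCast]
  simp

lemma norm_one_div_add_pow_le {ε z : ℝ} (hε : 0 < ε) (hεz : ε < z) (n k : ℕ) :
    ‖1 / (z + k) ^ n‖ ≤ 1 / (ε + k) ^ n := by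
  have hz : 0 < z := hε.trans hεz
  rw [Real.norm_of_nonneg (by positivity)]
  gcongr

/-- The Hurwitz zeta function `ζ(n, x)`. -/
noncomputable def hurwitzSum (n : ℕ) (x : ℝ) : ℝ := ∑' k : ℕ, 1 / (x + k) ^ n

section Hurwitz

variable {n : ℕ} {x : ℝ}

lemma summable_one_div_add_pow (hn : 2 ≤ n) (hx : 0 < x) :
    Summable fun k : ℕ => 1 / (x + k) ^ n := by
  refine ((summable_one_div_nat_add_rpow x n).2 (by exact_mod_cast hn)).congr fun k => ?_
  rw [abs_of_pos (by positivity), rpow_natCast, add_comm]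

lemma hurwitzSum_eq_one_div_pow_add (hn : 2 ≤ n) (hx : 0 < x) :
    hurwitzSum n x = 1 / x ^ n + hurwitzSum n (x + 1) := by
  rw [hurwitzSum, (summable_one_div_add_pow hn hx).tsum_eq_zero_add, hurwitzSum]
  simp only [Nat.cast_zero, add_zero, Nat.cast_succ, add_assoc, add_comm (1 : ℝ)]

-- Unconditional: a divergent `tsum` is `0`.
lemma tendsto_hurwitzSum_add_nat (n : ℕ) (x : ℝ) :
    Tendsto (fun m : ℕ => hurwitzSum n (x + m)) atTop (𝓝 0) := by
  refine Tendsto.congr (fun m => ?_) (tendsto_sum_nat_add fun k : ℕ => 1 / (x + k) ^ n)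
  simp only [hurwitzSum, Nat.cast_add, add_assoc, add_comm (m : ℝ)]

lemma hasDerivAt_hurwitzSum (hn : 2 ≤ n) (hx : 0 < x) :
    HasDerivAt (hurwitzSum n) (-n * hurwitzSum (n + 1) x) x := by
  have hx2 : 0 < x / 2 := by positivity
  have h := hasDerivAt_tsum_of_isPreconnected
    (g := fun (k : ℕ) (y : ℝ) => 1 / (y + k) ^ n) (y₀ := x) (y := x)
    ((summable_one_div_add_pow (by omega : 2 ≤ n + 1) hx2).mul_left (n : ℝ)) isOpen_Ioi
    (convex_Ioi (x / 2)).isPreconnected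
    (fun k z (hz : x / 2 < z) =>
      hasDerivAt_one_div_add_pow n (a := k) (by linarith [k.cast_nonneg (α := ℝ)]))
    (fun k z (hz : x / 2 < z) => by
      rw [norm_mul, norm_neg, Real.norm_natCast]
      exact mul_le_mul_of_nonneg_left (norm_one_div_add_pow_le hx2 hz _ _) n.cast_nonneg)
    (by simp only [mem_Ioi]; linarith) (summable_one_div_add_pow hn hx)
    (by simp only [mem_Ioi]; linarith)
  rwa [tsum_mul_left] at h

lemma one_div_add_one_div_two_mul_sq_le_hurwitzSum_two (hx : 0 < x) :
    1 / x + 1 / (2 * x ^ 2) ≤ hurwitzSum 2 x := by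
  suffices 0 ≤ hurwitzSum 2 x - (1 / x + 1 / (2 * x ^ 2)) by linarith
  refine nonneg_of_map_add_one_le (f := fun y => hurwitzSum 2 y - (1 / y + 1 / (2 * y ^ 2)))
    hx (fun y hy => ?_) ?_
  · have hstep :
        1 / y + 1 / (2 * y ^ 2) - (1 / (y + 1) + 1 / (2 * (y + 1) ^ 2)) ≤ 1 / y ^ 2 := by
      rw [div_add_div _ _ hy.ne' (by positivity), div_add_div _ _ (by positivity) (by positivity),
        div_sub_div _ _ (by positivity) (by positivity),
        div_le_div_iff₀ (by positivity) (by positivity)]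
      ring_nf
      nlinarith [pow_pos hy 5, pow_pos hy 6, pow_pos hy 7, pow_pos hy 8]
    simp only [hurwitzSum_eq_one_div_pow_add le_rfl hy] at hstep ⊢
    linarith
  · have hinv := (tendsto_add_natCast_atTop x).inv_tendsto_atTop
    simpa [one_div] using
      (tendsto_hurwitzSum_add_nat 2 x).sub (hinv.add ((hinv.pow 2).mul_const 2⁻¹))

end Hurwitz

/-- The series of `ψ x - ψ 1`. -/
noncomputable def digammaSeries (x : ℝ) : ℝ := ∑' k : ℕ, (1 / (1 + k) - 1 / (x + k))

section DigammaSeries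

variable {x : ℝ}

lemma hasDerivAt_one_div_sub_one_div_add {z : ℝ} (k : ℕ) (hz : 0 < z + k) :
    HasDerivAt (fun y : ℝ => 1 / (1 + k) - 1 / (y + k)) (1 / (z + k) ^ 2) z := by
  simpa using (hasDerivAt_one_div_add_pow 1 hz).const_sub (1 / (1 + k : ℝ))

lemma summable_digammaSeries (hx : 0 < x) :
    Summable fun k : ℕ => 1 / (1 + k) - 1 / (x + k) := by
  have hε : 0 < min x 1 / 2 := by positivity
  refine summable_of_summable_hasDerivAt_of_isPreconnected
    (g := fun (k : ℕ) (y : ℝ) => 1 / (1 + k) - 1 / (y + k)) (y₀ := 1)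
    (summable_one_div_add_pow le_rfl hε) isOpen_Ioi (convex_Ioi _).isPreconnected
    (fun k z (hz : _ < z) =>
      hasDerivAt_one_div_sub_one_div_add k (by linarith [k.cast_nonneg (α := ℝ)]))
    (fun k z hz => norm_one_div_add_pow_le hε hz 2 k) ?_ (by simp) ?_
  all_goals simp only [mem_Ioi]; linarith [min_le_left x 1, min_le_right x 1]

lemma hasDerivAt_digammaSeries (hx : 0 < x) : HasDerivAt digammaSeries (hurwitzSum 2 x) x := by
  have hε : 0 < x / 2 := by positivity
  exact hasDerivAt_tsum_of_isPreconnected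
    (g := fun (k : ℕ) (y : ℝ) => 1 / (1 + k) - 1 / (y + k)) (y₀ := x)
    (summable_one_div_add_pow le_rfl hε) isOpen_Ioi (convex_Ioi _).isPreconnected
    (fun k z (hz : _ < z) =>
      hasDerivAt_one_div_sub_one_div_add k (by linarith [k.cast_nonneg (α := ℝ)]))
    (fun k z hz => norm_one_div_add_pow_le hε hz 2 k) (by simp only [mem_Ioi]; linarith)
    (summable_digammaSeries hx) (by simp only [mem_Ioi]; linarith)

lemma digammaSeries_add_one (hx : 0 < x) : digammaSeries (x + 1) = digammaSeries x + x⁻¹ := by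
  have htel : HasSum (fun k : ℕ => 1 / (x + k) - 1 / (x + ↑(k + 1))) x⁻¹ := by
    have hanti : Antitone fun k : ℕ => 1 / (x + k) := fun i j hij => by
      dsimp only
      gcongr
    have hinv : Tendsto (fun k : ℕ => (x + k)⁻¹) atTop (𝓝 0) :=
      (tendsto_add_natCast_atTop x).inv_tendsto_atTop
    have h := hanti.hasSum_sub_succ (by simpa only [one_div] using hinv)
    rwa [Nat.cast_zero, add_zero, sub_zero, one_div] at h
  refine (((summable_digammaSeries hx).hasSum.add htel).congr_fun fun k => ?_).tsum_eq
  push_cast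
  ring

lemma monotoneOn_digammaSeries : MonotoneOn digammaSeries (Ioi 0) := fun a (ha : 0 < a) b _ hab =>
  (summable_digammaSeries ha).tsum_le_tsum (fun k => by gcongr)
    (summable_digammaSeries (ha.trans_le hab))

end DigammaSeries

section Psi

variable {x : ℝ}

lemma differentiableAt_log_Gamma (hx : 0 < x) :
    DifferentiableAt ℝ (fun y => log (Gamma y)) x :=
  (differentiableAt_Gamma fun m => by linarith [m.cast_nonneg (α := ℝ)]).log
    (Gamma_pos_of_pos hx).ne'

lemma monotoneOn_psi : MonotoneOn psi (Ioi 0) :=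
  convexOn_log_Gamma.monotoneOn_deriv fun _ hx => differentiableAt_log_Gamma hx

lemma psi_add_one (hx : 0 < x) : psi (x + 1) = psi x + x⁻¹ := by
  have hshift : (fun y => log (Gamma (y + 1))) =ᶠ[𝓝 x] fun y => log (Gamma y) + log y := by
    filter_upwards [eventually_gt_nhds hx] with y hy
    rw [Gamma_add_one hy.ne', log_mul hy.ne' (Gamma_pos_of_pos hy).ne', add_comm]
  rw [psi, ← deriv_comp_add_const, hshift.deriv_eq,
    deriv_fun_add (differentiableAt_log_Gamma hx) (differentiableAt_log hx.ne'), deriv_log]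

lemma psi_eq_digammaSeries_add (hx : 0 < x) : psi x = digammaSeries x + psi 1 := by
  have h := sub_eq_sub_of_monotoneOn monotoneOn_psi monotoneOn_digammaSeries
    (fun _ => psi_add_one) (fun _ => digammaSeries_add_one) tendsto_inv_atTop_zero hx one_pos
  have h1 : digammaSeries 1 = 0 := by simp [digammaSeries]
  linarith

lemma deriv_psi (hx : 0 < x) : deriv psi x = hurwitzSum 2 x := by
  have h : psi =ᶠ[𝓝 x] fun y => digammaSeries y + psi 1 := by
    filter_upwards [eventually_gt_nhds hx] with y hy using psi_eq_digammaSeries_add hy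
  rw [h.deriv_eq, ((hasDerivAt_digammaSeries hx).add_const _).deriv]

lemma deriv_deriv_psi (hx : 0 < x) : deriv (deriv psi) x = -2 * hurwitzSum 3 x := by
  have h : deriv psi =ᶠ[𝓝 x] hurwitzSum 2 := by
    filter_upwards [eventually_gt_nhds hx] with y hy using deriv_psi hy
  rw [h.deriv_eq, (hasDerivAt_hurwitzSum le_rfl hx).deriv]
  norm_num

end Psi

section SquareSubPos

variable {x : ℝ}

lemma one_div_sub_one_div_two_mul_sq_lt (hx : 0 < x) :
    1 / x - 1 / (2 * x ^ 2) < 1 / (x + 1) + 1 / (2 * (x + 1) ^ 2) := by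
  rw [div_sub_div _ _ hx.ne' (by positivity), div_add_div _ _ (by positivity) (by positivity),
    div_lt_div_iff₀ (by positivity) (by positivity)]
  ring_nf
  nlinarith [pow_pos hx 3, pow_pos hx 4, pow_pos hx 5, pow_pos hx 6]

lemma hurwitzSum_sq_sub_add_one_lt (hx : 0 < x) :
    hurwitzSum 2 (x + 1) ^ 2 - 2 * hurwitzSum 3 (x + 1) <
      hurwitzSum 2 x ^ 2 - 2 * hurwitzSum 3 x := by
  have hS := one_div_add_one_div_two_mul_sq_le_hurwitzSum_two (by linarith : 0 < x + 1)
  have hgap := one_div_sub_one_div_two_mul_sq_lt hx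
  have hdiff : hurwitzSum 2 x ^ 2 - 2 * hurwitzSum 3 x
      - (hurwitzSum 2 (x + 1) ^ 2 - 2 * hurwitzSum 3 (x + 1))
      = 2 / x ^ 2 * (hurwitzSum 2 (x + 1) - (1 / x - 1 / (2 * x ^ 2))) := by
    rw [hurwitzSum_eq_one_div_pow_add (by norm_num) hx,
      hurwitzSum_eq_one_div_pow_add (by norm_num : 2 ≤ 3) hx]
    field_simp
    ring
  have : 0 < 2 / x ^ 2 * (hurwitzSum 2 (x + 1) - (1 / x - 1 / (2 * x ^ 2))) :=
    mul_pos (by positivity) (by linarith)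
  linarith

lemma hurwitzSum_sq_sub_pos (hx : 0 < x) : 0 < hurwitzSum 2 x ^ 2 - 2 * hurwitzSum 3 x := by
  have hnonneg : 0 ≤ hurwitzSum 2 (x + 1) ^ 2 - 2 * hurwitzSum 3 (x + 1) := by
    refine nonneg_of_map_add_one_le (f := fun y => hurwitzSum 2 y ^ 2 - 2 * hurwitzSum 3 y)
      (by linarith) (fun y hy => (hurwitzSum_sq_sub_add_one_lt hy).le) ?_
    simpa using ((tendsto_hurwitzSum_add_nat 2 (x + 1)).pow 2).sub
      ((tendsto_hurwitzSum_add_nat 3 (x + 1)).const_mul 2)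
  exact hnonneg.trans_lt (hurwitzSum_sq_sub_add_one_lt hx)

end SquareSubPos

theorem trigamma_sq_add_tetragamma_pos (x : ℝ) (hx : 0 < x) :
    (deriv psi x) ^ 2 + deriv (deriv psi) x > 0 := by
  rw [deriv_psi hx, deriv_deriv_psi hx]
  linarith [hurwitzSum_sq_sub_pos hx]
end

section
/- For u > 0 and real c ≠ 0, the derivative with respect to u of tanh(cu/2)/(c·tanh(u/2)) equals u/(4 sinh²(u/2) cosh²(cu/2)) · (sinh(u)/u − sinh(cu)/(cu)). -/
open Real

theorem Real.hasDerivAt_tanh (x : ℝ) : HasDerivAt tanh (1 / cosh x ^ 2) x := by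
  have h := (hasDerivAt_sinh x).div (hasDerivAt_cosh x) (cosh_pos x).ne'
  rw [← sq, ← sq, cosh_sq_sub_sinh_sq] at h
  rwa [show tanh = sinh / cosh from funext tanh_eq_sinh_div_cosh]

theorem HasDerivAt.tanh {f : ℝ → ℝ} {f' x : ℝ} (hf : HasDerivAt f f' x) :
    HasDerivAt (fun y => Real.tanh (f y)) (f' / Real.cosh (f x) ^ 2) x := by
  simpa only [one_div_mul_eq_div, Function.comp_def] using (Real.hasDerivAt_tanh (f x)).comp x hf

theorem tanh_ratio_deriv (c : ℝ) (hc : c ≠ 0) (u : ℝ) (hu : 0 < u) :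
    deriv (fun v : ℝ => Real.tanh (c * v / 2) / (c * Real.tanh (v / 2))) u =
      u / (4 * Real.sinh (u / 2) ^ 2 * Real.cosh (c * u / 2) ^ 2) *
        (Real.sinh u / u - Real.sinh (c * u) / (c * u)) := by
  have hsinh : sinh (u / 2) ≠ 0 := (sinh_pos_iff.mpr (half_pos hu)).ne'
  have htanh : tanh (u / 2) ≠ 0 := by
    rw [tanh_eq_sinh_div_cosh]; exact div_ne_zero hsinh (cosh_pos _).ne'
  have hnum : HasDerivAt (fun v => tanh (c * v / 2)) (c / 2 / cosh (c * u / 2) ^ 2) u :=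
    (HasDerivAt.tanh (((hasDerivAt_id u).const_mul c).div_const 2)).congr_deriv (by simp)
  have hden : HasDerivAt (fun v => c * tanh (v / 2)) (c * (1 / 2 / cosh (u / 2) ^ 2)) u :=
    ((HasDerivAt.tanh ((hasDerivAt_id u).div_const 2)).const_mul c).congr_deriv (by simp)
  rw [(hnum.fun_div hden (mul_ne_zero hc htanh)).deriv]
  -- After the half-angle formulas both sides are rational in sinh and cosh of u/2 and c*u/2.
  have hsinh_double (x : ℝ) : sinh x = 2 * sinh (x / 2) * cosh (x / 2) := by
    rw [← sinh_two_mul, mul_div_cancel₀ x two_ne_zero]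
  rw [hsinh_double u, hsinh_double (c * u), mul_div_right_comm c u 2, tanh_eq_sinh_div_cosh,
    tanh_eq_sinh_div_cosh]
  field_simp
  ring
end

section
/- For real s < t with 0 < t − s < 1, the function θ_{s,t;1}(x) = (ψ(x+t)−ψ(x+s))/(t−s) − (1+(2x+s+t))/(2(x+s)(x+t)) is completely monotonic on (−s, ∞), i.e., (−1)^n θ_{s,t;1}^{(n)}(x) ≥ 0 for all n ≥ 0 and x > −s. -/
/-!
Put `y = x + s`, `v = t - s` and
`Tₙ(z) = (1-v) z⁻ⁿ⁻¹ - (1+v) (z+v)⁻ⁿ⁻¹ + (1+v) (z+1)⁻ⁿ⁻¹ - (1-v) (z+1+v)⁻ⁿ⁻¹`.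
The series `ψ(y + v) - ψ(y) = ∑ₖ ((y+k)⁻¹ - (y+v+k)⁻¹)` and a telescoping sum give
`2v θ(x) = ∑ₖ T₀(y + k)`, and termwise differentiation gives
`(-1)ⁿ θ⁽ⁿ⁾(x) = n!/(2v) ∑ₖ Tₙ(y + k)`.
Each `Tₙ(z)` is nonnegative: with `c = z + (1+v)/2`, the function `r ↦ (c-r)⁻ⁿ⁻¹ - (c+r)⁻ⁿ⁻¹`
is convex on `[0, c)` and vanishes at `0`, so its slope from `0` at `(1-v)/2` is at most its
slope at `(1+v)/2`, and this comparison is `Tₙ(z) ≥ 0`.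
-/

open Filter Topology Set

lemma hasDerivAt_inv_pow (n : ℕ) {z : ℝ} (hz : z ≠ 0) :
    HasDerivAt (fun x : ℝ => (x ^ (n + 1))⁻¹) (-(n + 1) * (z ^ (n + 2))⁻¹) z := by
  refine ((hasDerivAt_pow (n + 1) z).fun_inv (pow_ne_zero _ hz)).congr_deriv ?_
  rw [Nat.add_sub_cancel]
  field_simp
  push_cast
  ring

lemma summable_inv_add_pow {y : ℝ} {p : ℕ} (hp : 2 ≤ p) (hy : 0 < y) :
    Summable fun k : ℕ => ((y + k) ^ p)⁻¹ := by
  refine ((Real.summable_one_div_nat_add_rpow y p).2 (by exact_mod_cast hp)).congr fun k => ?_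
  rw [add_comm, abs_of_pos (by positivity), Real.rpow_natCast, one_div]

lemma abs_inv_sub_inv_add_le {q y a : ℝ} (hq : 0 < q) (hqy : q ≤ y) (ha : 0 ≤ a) :
    |y⁻¹ - (y + a)⁻¹| ≤ a * (q ^ 2)⁻¹ := by
  have hy : 0 < y := hq.trans_le hqy
  have e : y⁻¹ - (y + a)⁻¹ = a / (y * (y + a)) := by
    field_simp
    ring
  rw [e, abs_of_nonneg (by positivity), div_eq_mul_inv]
  gcongr
  nlinarith

lemma tsum_sub_succ_of_tendsto_zero {f : ℕ → ℝ} (hs : Summable fun k => f k - f (k + 1))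
    (hf : Tendsto f atTop (𝓝 0)) : ∑' k, (f k - f (k + 1)) = f 0 := by
  refine tendsto_nhds_unique hs.hasSum.tendsto_sum_nat ?_
  simp_rw [Finset.sum_range_sub']
  simpa using tendsto_const_nhds.sub hf

lemma convexOn_inv_pow_sub_sub_inv_pow_add (n : ℕ) (c : ℝ) :
    ConvexOn ℝ (Ico 0 c) (fun r => ((c - r) ^ (n + 1))⁻¹ - ((c + r) ^ (n + 1))⁻¹) := by
  have hpos {r : ℝ} (hr : r ∈ Ioo 0 c) : 0 < c - r ∧ 0 < c + r := by
    constructor <;> linarith [hr.1, hr.2]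
  have hsub (m : ℕ) {r : ℝ} (hr : r ∈ Ioo 0 c) :
      HasDerivAt (fun r => ((c - r) ^ (m + 1))⁻¹) ((m + 1) * ((c - r) ^ (m + 2))⁻¹) r :=
    ((hasDerivAt_inv_pow m (hpos hr).1.ne').comp r ((hasDerivAt_id r).const_sub c)).congr_deriv
      (by ring)
  have hadd (m : ℕ) {r : ℝ} (hr : r ∈ Ioo 0 c) :
      HasDerivAt (fun r => ((c + r) ^ (m + 1))⁻¹) (-(m + 1) * ((c + r) ^ (m + 2))⁻¹) r :=
    ((hasDerivAt_inv_pow m (hpos hr).2.ne').comp r ((hasDerivAt_id r).const_add c)).congr_deriv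
      (by ring)
  refine convexOn_of_hasDerivWithinAt2_nonneg (convex_Ico 0 c)
    (f' := fun r => (n + 1) * ((c - r) ^ (n + 2))⁻¹ + (n + 1) * ((c + r) ^ (n + 2))⁻¹)
    (f'' := fun r => (n + 1) * ((n + 2) * (((c - r) ^ (n + 3))⁻¹ - ((c + r) ^ (n + 3))⁻¹)))
    ?_ (fun r hr => ?_) (fun r hr => ?_) (fun r hr => ?_)
  · refine ContinuousOn.sub (ContinuousOn.inv₀ (by fun_prop) fun r hr => ?_)
      (ContinuousOn.inv₀ (by fun_prop) fun r hr => ?_) <;>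
    exact pow_ne_zero _ (by linarith [hr.1, hr.2])
  · rw [interior_Ico] at hr
    exact ((hsub n hr).sub (hadd n hr)).hasDerivWithinAt.congr_deriv (by ring)
  · rw [interior_Ico] at hr
    refine (((hsub (n + 1) hr).const_mul _).add
      ((hadd (n + 1) hr).const_mul _)).hasDerivWithinAt.congr_deriv ?_
    push_cast
    ring
  · rw [interior_Ico] at hr
    have : ((c + r) ^ (n + 3))⁻¹ ≤ ((c - r) ^ (n + 3))⁻¹ :=
      inv_anti₀ (pow_pos (hpos hr).1 _) (pow_le_pow_left₀ (hpos hr).1.le (by linarith [hr.1]) _)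
    exact mul_nonneg (by positivity) (mul_nonneg (by positivity) (sub_nonneg.2 this))

open Real in
lemma hasDerivAt_log_Gamma {x : ℝ} (hx : 0 < x) :
    HasDerivAt (fun z => log (Gamma z)) (psi x) x := by
  refine (DifferentiableAt.log ?_ (Gamma_pos_of_pos hx).ne').hasDerivAt
  exact differentiableAt_Gamma fun m => by linarith [(Nat.cast_nonneg m : (0 : ℝ) ≤ m)]

open Real BohrMollerup in
lemma hasDerivAt_logGammaSeq {x : ℝ} (hx : 0 < x) (n : ℕ) :
    HasDerivAt (logGammaSeq · n) (log n - ∑ m ∈ Finset.range (n + 1), (x + m)⁻¹) x := by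
  have hlog : HasDerivAt (fun z => ∑ m ∈ Finset.range (n + 1), log (z + m))
      (∑ m ∈ Finset.range (n + 1), (x + m)⁻¹) x :=
    HasDerivAt.fun_sum fun m _ => (hasDerivAt_log (by positivity)).comp_add_const x (m : ℝ)
  refine ((((hasDerivAt_id x).mul_const (log n)).add_const (log n.factorial)).sub hlog
    ).congr_deriv ?_
  simp

open Real BohrMollerup in
lemma psi_add_sub_psi {x a : ℝ} (hx : 0 < x) (ha : 0 ≤ a) :
    psi (x + a) - psi x = ∑' k : ℕ, ((x + k)⁻¹ - (x + a + k)⁻¹) := by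
  have hpos {z : ℝ} (hz : z ∈ Ioi (x / 2)) : 0 < z := by linarith [mem_Ioi.1 hz]
  have hx2 : x ∈ Ioi (x / 2) := by simp [hx]
  have hunif : TendstoUniformlyOn
      (fun N (z : ℝ) => ∑ k ∈ Finset.range N, ((z + k)⁻¹ - (z + a + k)⁻¹))
      (fun z => ∑' k : ℕ, ((z + k)⁻¹ - (z + a + k)⁻¹)) atTop (Ioi (x / 2)) := by
    refine tendstoUniformlyOn_tsum_nat
      ((summable_inv_add_pow le_rfl (by positivity : 0 < x / 2)).mul_left a) fun k z hz => ?_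
    rw [Real.norm_eq_abs, add_right_comm]
    exact abs_inv_sub_inv_add_le (by positivity) (by linarith [mem_Ioi.1 hz]) ha
  have hderiv : ∀ n : ℕ, ∀ z ∈ Ioi (x / 2), HasDerivAt
      (fun z => logGammaSeq (z + a) n - logGammaSeq z n)
      (∑ k ∈ Finset.range (n + 1), ((z + k)⁻¹ - (z + a + k)⁻¹)) z := fun n z hz => by
    refine (((hasDerivAt_logGammaSeq (by linarith [hpos hz]) n).comp_add_const z a).sub
      (hasDerivAt_logGammaSeq (hpos hz) n)).congr_deriv ?_
    rw [Finset.sum_sub_distrib]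
    ring
  have hlim : ∀ z ∈ Ioi (x / 2), Tendsto (fun n => logGammaSeq (z + a) n - logGammaSeq z n)
      atTop (𝓝 (log (Gamma (z + a)) - log (Gamma z))) := fun z hz =>
    (tendsto_log_gamma (by linarith [hpos hz])).sub (tendsto_log_gamma (hpos hz))
  have := hasDerivAt_of_tendstoUniformlyOn isOpen_Ioi
    (fun u hu => (tendsto_add_atTop_nat 1).eventually (hunif u hu))
    (.of_forall hderiv) hlim hx2
  exact (((hasDerivAt_log_Gamma (by linarith)).comp_add_const x a).sub
    (hasDerivAt_log_Gamma hx)).unique this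

noncomputable def thetaTerm (v : ℝ) (n : ℕ) (y : ℝ) : ℝ :=
  (1 - v) * (y ^ (n + 1))⁻¹ - (1 + v) * ((y + v) ^ (n + 1))⁻¹
    + (1 + v) * ((y + 1) ^ (n + 1))⁻¹ - (1 - v) * ((y + 1 + v) ^ (n + 1))⁻¹

noncomputable def thetaSeries (v : ℝ) (n : ℕ) (y : ℝ) : ℝ :=
  ∑' k : ℕ, thetaTerm v n (y + k)

section thetaTerm

variable {v y : ℝ}

lemma thetaTerm_nonneg (hv₀ : 0 ≤ v) (hv₁ : v ≤ 1) (n : ℕ) (hy : 0 < y) :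
    0 ≤ thetaTerm v n y := by
  rcases hv₁.eq_or_lt with rfl | hv₁
  · simp [thetaTerm]
  set R := (1 + v) / 2
  set ρ := (1 - v) / 2
  have hR : 0 < R := by positivity
  have hρ : 0 < ρ := by simp only [ρ]; linarith
  have hρR : ρ ≤ R := by simp only [ρ, R]; linarith
  have hmem : ∀ r, 0 ≤ r → r ≤ R → r ∈ Ico 0 (y + R) := fun r h0 h1 => ⟨h0, by linarith⟩
  have key := (convexOn_inv_pow_sub_sub_inv_pow_add n (y + R)).secant_mono
    (hmem 0 le_rfl hR.le) (hmem ρ hρ.le hρR) (hmem R hR.le le_rfl) hρ.ne' hR.ne' hρR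
  have e1 : y + R - ρ = y + v := by ring
  have e2 : y + R + ρ = y + 1 := by ring
  have e3 : y + R - R = y := by ring
  have e4 : y + R + R = y + 1 + v := by ring
  simp only [e1, e2, e3, e4, add_zero, sub_zero, sub_self, div_le_div_iff₀ hρ hR] at key
  unfold thetaTerm
  simp only [R, ρ] at key
  linarith

lemma thetaTerm_le (hv₀ : 0 ≤ v) (hv₁ : v ≤ 1) (n : ℕ) (hy : 0 < y) :
    thetaTerm v n y ≤ (1 - v) * ((y ^ (n + 1))⁻¹ - ((y + 1 + v) ^ (n + 1))⁻¹) := by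
  have : ((y + 1) ^ (n + 1))⁻¹ ≤ ((y + v) ^ (n + 1))⁻¹ :=
    inv_anti₀ (by positivity) (pow_le_pow_left₀ (by positivity) (by linarith) _)
  unfold thetaTerm
  nlinarith

lemma thetaTerm_le_inv_pow (hv₀ : 0 ≤ v) (hv₁ : v ≤ 1) (n : ℕ) (hy : 0 < y) :
    thetaTerm v n y ≤ (y ^ (n + 1))⁻¹ := by
  have : 0 ≤ ((y + 1 + v) ^ (n + 1))⁻¹ := by positivity
  have : 0 ≤ (y ^ (n + 1))⁻¹ := by positivity
  nlinarith [thetaTerm_le hv₀ hv₁ n hy]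

lemma thetaTerm_zero_le_inv_sq (hv₀ : 0 ≤ v) (hv₁ : v ≤ 1) (hy : 0 < y) :
    thetaTerm v 0 y ≤ (y ^ 2)⁻¹ := by
  refine (thetaTerm_le hv₀ hv₁ 0 hy).trans ?_
  have e : (1 - v) * ((y ^ 1)⁻¹ - ((y + 1 + v) ^ 1)⁻¹) = (1 - v ^ 2) / (y * (y + 1 + v)) := by
    field_simp
    ring
  rw [e, div_le_iff₀ (by positivity), sq, inv_mul_eq_div, le_div_iff₀ (by positivity)]
  nlinarith

lemma hasDerivAt_thetaTerm (hv₀ : 0 ≤ v) (n : ℕ) (hy : 0 < y) :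
    HasDerivAt (thetaTerm v n) (-(n + 1) * thetaTerm v (n + 1) y) y := by
  have h (c : ℝ) (hc : 0 ≤ c) : HasDerivAt (fun z => ((z + c) ^ (n + 1))⁻¹)
      (-(n + 1) * ((y + c) ^ (n + 2))⁻¹) y :=
    (hasDerivAt_inv_pow n (by positivity)).comp_add_const y c
  have h0 : HasDerivAt (fun z : ℝ => (z ^ (n + 1))⁻¹) (-(n + 1) * (y ^ (n + 2))⁻¹) y :=
    hasDerivAt_inv_pow n hy.ne'
  refine ((((h0.const_mul (1 - v)).sub ((h v hv₀).const_mul (1 + v))).add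
    ((h 1 zero_le_one).const_mul (1 + v))).sub ((h (1 + v) (by positivity)).const_mul (1 - v))
    |>.congr_deriv ?_).congr_of_eventuallyEq (.of_forall fun z => ?_)
  · simp only [thetaTerm, add_assoc]
    ring
  · simp only [thetaTerm, Pi.add_apply, Pi.sub_apply, add_assoc]

lemma summable_thetaTerm (hv₀ : 0 ≤ v) (hv₁ : v ≤ 1) (n : ℕ) (hy : 0 < y) :
    Summable fun k : ℕ => thetaTerm v n (y + k) := by
  have hyk (k : ℕ) : 0 < y + k := by positivity
  cases n with
  | zero =>
    exact .of_nonneg_of_le (fun k => thetaTerm_nonneg hv₀ hv₁ 0 (hyk k))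
      (fun k => thetaTerm_zero_le_inv_sq hv₀ hv₁ (hyk k)) (summable_inv_add_pow le_rfl hy)
  | succ n =>
    exact .of_nonneg_of_le (fun k => thetaTerm_nonneg hv₀ hv₁ _ (hyk k))
      (fun k => thetaTerm_le_inv_pow hv₀ hv₁ _ (hyk k)) (summable_inv_add_pow (by omega) hy)

end thetaTerm

section thetaSeries

variable {v y : ℝ}

lemma thetaSeries_nonneg (hv₀ : 0 ≤ v) (hv₁ : v ≤ 1) (n : ℕ) (hy : 0 < y) :
    0 ≤ thetaSeries v n y :=
  tsum_nonneg fun k => thetaTerm_nonneg hv₀ hv₁ n (by positivity)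

lemma hasDerivAt_thetaSeries (hv₀ : 0 ≤ v) (hv₁ : v ≤ 1) (n : ℕ) (hy : 0 < y) :
    HasDerivAt (thetaSeries v n) (-(n + 1) * thetaSeries v (n + 1) y) y := by
  have hpos {z : ℝ} (hz : z ∈ Ioi (y / 2)) (k : ℕ) : 0 < z + k := by
    have : 0 < z := by linarith [mem_Ioi.1 hz]
    positivity
  have hy2 : y ∈ Ioi (y / 2) := by simp [hy]
  refine (hasDerivAt_tsum_of_isPreconnected
    (g := fun (k : ℕ) z => thetaTerm v n (z + k))
    (g' := fun k z => -(n + 1) * thetaTerm v (n + 1) (z + k))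
    (u := fun k : ℕ => (n + 1) * ((y / 2 + k) ^ (n + 2))⁻¹)
    ((summable_inv_add_pow (by omega) (by positivity)).mul_left _) isOpen_Ioi
    (convex_Ioi _).isPreconnected
    (fun k z hz => (hasDerivAt_thetaTerm hv₀ n (hpos hz k)).comp_add_const z k)
    (fun k z hz => ?_) hy2 (summable_thetaTerm hv₀ hv₁ n hy) hy2).congr_deriv tsum_mul_left
  · rw [norm_mul, norm_neg, Real.norm_of_nonneg (by positivity),
      Real.norm_of_nonneg (thetaTerm_nonneg hv₀ hv₁ _ (hpos hz k))]
    gcongr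
    refine (thetaTerm_le_inv_pow hv₀ hv₁ _ (hpos hz k)).trans ?_
    have : 0 < y / 2 := by positivity
    gcongr
    exact (mem_Ioi.1 hz).le

lemma iteratedDeriv_thetaSeries (hv₀ : 0 ≤ v) (hv₁ : v ≤ 1) (n : ℕ) (hy : 0 < y) :
    iteratedDeriv n (thetaSeries v 0) y = (-1) ^ n * n.factorial * thetaSeries v n y := by
  induction n generalizing y with
  | zero => simp
  | succ n ih =>
    have hev : iteratedDeriv n (thetaSeries v 0) =ᶠ[𝓝 y]
        fun z => (-1) ^ n * n.factorial * thetaSeries v n z :=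
      eventually_of_mem (Ioi_mem_nhds hy) fun z hz => ih hz
    rw [iteratedDeriv_succ, hev.deriv_eq, ((hasDerivAt_thetaSeries hv₀ hv₁ n hy).const_mul _).deriv,
      Nat.factorial_succ]
    push_cast
    ring

lemma thetaSeries_zero_eq (hv₀ : 0 ≤ v) (hv₁ : v ≤ 1) (hy : 0 < y) :
    thetaSeries v 0 y = 2 * (psi (y + v) - psi y) - ((1 + v) / y - (1 - v) / (y + v)) := by
  set d : ℕ → ℝ := fun k => (y + k)⁻¹ - (y + v + k)⁻¹
  set U : ℕ → ℝ := fun k => (1 + v) / (y + k) - (1 - v) / (y + v + k)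
  have hterm (k : ℕ) : thetaTerm v 0 (y + k) = 2 * d k - (U k - U (k + 1)) := by
    simp only [thetaTerm, d, U]
    push_cast
    ring
  have hd : Summable d := by
    refine .of_norm_bounded ((summable_inv_add_pow le_rfl hy).mul_left v) fun k => ?_
    rw [Real.norm_eq_abs, show d k = (y + k)⁻¹ - (y + k + v)⁻¹ by simp only [d, add_right_comm]]
    exact abs_inv_sub_inv_add_le (by positivity) le_rfl hv₀
  have hU : Summable fun k => U k - U (k + 1) :=
    ((hd.mul_left 2).sub (summable_thetaTerm hv₀ hv₁ 0 hy)).congr fun k => by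
      rw [hterm]
      ring
  have hUlim : Tendsto U atTop (𝓝 0) := by
    have h (c : ℝ) : Tendsto (fun k : ℕ => c + k) atTop atTop :=
      tendsto_atTop_add_const_left _ c tendsto_natCast_atTop_atTop
    simpa using (tendsto_const_nhds.div_atTop (h y)).sub (tendsto_const_nhds.div_atTop (h (y + v)))
  calc thetaSeries v 0 y = ∑' k, (2 * d k - (U k - U (k + 1))) := tsum_congr hterm
    _ = 2 * ∑' k, d k - ∑' k, (U k - U (k + 1)) := by
      rw [(hd.mul_left 2).tsum_sub hU, tsum_mul_left]
    _ = 2 * (psi (y + v) - psi y) - ((1 + v) / y - (1 - v) / (y + v)) := by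
      rw [psi_add_sub_psi hy hv₀, tsum_sub_succ_of_tendsto_zero hU hUlim]
      simp [d, U]

end thetaSeries

lemma theta_eq_thetaSeries {s t x : ℝ} (hst : s < t) (h1 : t - s ≤ 1) (hx : -s < x) :
    (psi (x + t) - psi (x + s)) / (t - s) - (1 + (2 * x + s + t)) / (2 * (x + s) * (x + t))
      = (2 * (t - s))⁻¹ * thetaSeries (t - s) 0 (x + s) := by
  have hxs : 0 < x + s := by linarith
  have hxt : 0 < x + t := by linarith
  have hv : 0 < t - s := by linarith
  rw [thetaSeries_zero_eq hv.le h1 hxs, show x + s + (t - s) = x + t by ring]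
  field_simp
  ring

theorem theta_one_completely_monotonic (s t : ℝ) (hst : s < t) (h1 : t - s < 1) :
    ∀ n : ℕ, ∀ x : ℝ, -s < x →
      0 ≤ (-1 : ℝ) ^ n *
        iteratedDeriv n (fun x : ℝ =>
          (psi (x + t) - psi (x + s)) / (t - s) -
            (1 + (2 * x + s + t)) / (2 * (x + s) * (x + t))) x := by
  intro n x hx
  have hv : 0 ≤ t - s := by linarith
  have hθ : (fun x : ℝ => (psi (x + t) - psi (x + s)) / (t - s) -
        (1 + (2 * x + s + t)) / (2 * (x + s) * (x + t))) =ᶠ[𝓝 x]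
      fun z => (2 * (t - s))⁻¹ * thetaSeries (t - s) 0 (z + s) :=
    eventually_of_mem (Ioi_mem_nhds hx) fun z hz => theta_eq_thetaSeries hst h1.le hz
  rw [(hθ.iteratedDeriv n).eq_of_nhds, iteratedDeriv_const_mul_field,
    iteratedDeriv_comp_add_const]
  dsimp only
  rw [iteratedDeriv_thetaSeries hv h1.le n (by linarith)]
  have hS := thetaSeries_nonneg hv h1.le n (show 0 < x + s by linarith)
  calc (0 : ℝ)
      ≤ ((-1) ^ n) ^ 2 * (2 * (t - s))⁻¹ * n.factorial * thetaSeries (t - s) n (x + s) := by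
        positivity
    _ = _ := by ring
end

section
/- For real s, the function θ_{s,s;λ}(x) = ψ'(x+s) − (1+2λ(x+s))/(2(x+s)²) is completely monotonic on (−s,∞) if and only if λ ≤ 1. -/
open Filter Topology Finset

namespace Trigamma

lemma hasDerivAt_inv_pow_add (m : ℕ) {c x : ℝ} (h : x + c ≠ 0) :
    HasDerivAt (fun y : ℝ => ((y + c) ^ (m + 1))⁻¹) (-((m : ℝ) + 1) * ((x + c) ^ (m + 2))⁻¹) x := by
  have := (((hasDerivAt_id x).add_const c).fun_pow (m + 1)).fun_inv (pow_ne_zero _ h)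
  refine this.congr_deriv ?_
  simp only [id, add_tsub_cancel_right, mul_one]
  field_simp
  push_cast
  ring

lemma norm_inv_pow_add_le {m k : ℕ} {c y : ℝ} (hc : 0 < c) (hy : c < y) :
    ‖((y + k) ^ m)⁻¹‖ ≤ ((c + k) ^ m)⁻¹ := by
  have : 0 < y := hc.trans hy
  rw [norm_inv, norm_pow, Real.norm_of_nonneg (by positivity)]
  gcongr

lemma summable_inv_pow_add {m : ℕ} (hm : 2 ≤ m) {t : ℝ} (ht : 0 < t) :
    Summable (fun k : ℕ => ((t + k) ^ m)⁻¹) := by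
  have := (Real.summable_one_div_nat_add_rpow t m).mpr (by exact_mod_cast hm)
  refine this.congr fun k => ?_
  rw [abs_of_pos (by positivity), Real.rpow_natCast, one_div, add_comm]

noncomputable def hurwitzSeries (m : ℕ) (t : ℝ) : ℝ := ∑' k : ℕ, ((t + k) ^ m)⁻¹

lemma hasDerivAt_hurwitzSeries (m : ℕ) {t : ℝ} (ht : 0 < t) :
    HasDerivAt (hurwitzSeries (m + 2)) (-((m : ℝ) + 2) * hurwitzSeries (m + 3) t) t := by
  have hc : 0 < t / 2 := by positivity
  have := hasDerivAt_tsum_of_isPreconnected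
    ((summable_inv_pow_add (m := m + 3) (by omega) hc).mul_left ((m : ℝ) + 2))
    isOpen_Ioi isPreconnected_Ioi
    (fun k y (hy : t / 2 < y) => hasDerivAt_inv_pow_add (m + 1) (c := k)
      (add_pos_of_pos_of_nonneg (hc.trans hy) k.cast_nonneg).ne')
    (fun k y (hy : t / 2 < y) => ?_) (half_lt_self ht) (summable_inv_pow_add (by omega) ht)
    (half_lt_self ht)
  · refine this.congr_deriv ?_
    rw [hurwitzSeries, ← tsum_mul_left]
    exact tsum_congr fun k => by push_cast; ring
  · rw [norm_mul, norm_neg, Real.norm_of_nonneg (by positivity)]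
    rw [show ((m + 1 : ℕ) : ℝ) + 1 = m + 2 by push_cast; ring]
    exact mul_le_mul_of_nonneg_left (norm_inv_pow_add_le hc hy) (by positivity)

noncomputable def digammaTerm (k : ℕ) (x : ℝ) : ℝ := ((k : ℝ) + 1)⁻¹ - (x + k)⁻¹

lemma hasDerivAt_digammaTerm (k : ℕ) {x : ℝ} (hx : 0 < x) :
    HasDerivAt (digammaTerm k) ((x + k) ^ 2)⁻¹ x := by
  have := (hasDerivAt_inv_pow_add 0 (c := k) (x := x) (by positivity)).const_sub ((k : ℝ) + 1)⁻¹
  simp only [zero_add, pow_one, Nat.cast_zero, neg_mul, one_mul, neg_neg] at this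
  exact this

lemma digammaTerm_mono (k : ℕ) {x y : ℝ} (hx : 0 < x) (hxy : x ≤ y) :
    digammaTerm k x ≤ digammaTerm k y := by
  unfold digammaTerm
  gcongr

lemma digammaTerm_one (k : ℕ) : digammaTerm k 1 = 0 := by
  rw [digammaTerm, add_comm, sub_self]

lemma summable_digammaTerm {x : ℝ} (hx : 0 < x) : Summable (fun k => digammaTerm k x) := by
  have hm : 0 < min x 1 := lt_min hx one_pos
  exact summable_of_summable_hasDerivAt_of_isPreconnected
    (summable_inv_pow_add le_rfl (half_pos hm)) isOpen_Ioi isPreconnected_Ioi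
    (fun k y (hy : min x 1 / 2 < y) => hasDerivAt_digammaTerm k ((half_pos hm).trans hy))
    (fun _ y (hy : min x 1 / 2 < y) => norm_inv_pow_add_le (half_pos hm) hy)
    ((half_lt_self hm).trans_le (min_le_right x 1)) (by simp only [digammaTerm_one, summable_zero])
    ((half_lt_self hm).trans_le (min_le_left x 1))

lemma hasDerivAt_tsum_digammaTerm {x : ℝ} (hx : 0 < x) :
    HasDerivAt (fun y => ∑' k, digammaTerm k y) (hurwitzSeries 2 x) x :=
  hasDerivAt_tsum_of_isPreconnected (summable_inv_pow_add le_rfl (half_pos hx)) isOpen_Ioi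
    isPreconnected_Ioi
    (fun k y (hy : x / 2 < y) => hasDerivAt_digammaTerm k ((half_pos hx).trans hy))
    (fun _ y (hy : x / 2 < y) => norm_inv_pow_add_le (half_pos hx) hy)
    (half_lt_self hx) (summable_digammaTerm hx) (half_lt_self hx)

lemma tendstoUniformlyOn_digammaTerm {a b : ℝ} (ha : 0 < a) (hab : a ≤ b) :
    TendstoUniformlyOn (fun N y => ∑ k ∈ range N, digammaTerm k y)
      (fun y => ∑' k, digammaTerm k y) atTop (Set.Icc a b) := by
  refine tendstoUniformlyOn_tsum_nat (u := fun k => max |digammaTerm k a| |digammaTerm k b|)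
    (Summable.of_nonneg_of_le (fun _ => by positivity)
      (fun k => max_le_add_of_nonneg (abs_nonneg _) (abs_nonneg _))
      ((summable_digammaTerm ha).abs.add (summable_digammaTerm (ha.trans_le hab)).abs))
    fun k y hy => ?_
  rw [Real.norm_eq_abs]
  exact abs_le_max_abs_abs (digammaTerm_mono k ha hy.1) (digammaTerm_mono k (ha.trans_le hy.1) hy.2)

open Real.BohrMollerup in
lemma hasDerivAt_logGammaSeq (n : ℕ) {x : ℝ} (hx : 0 < x) :
    HasDerivAt (fun y => logGammaSeq y n) (Real.log n - ∑ k ∈ range (n + 1), (x + k)⁻¹) x := by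
  have hlog : ∀ k ∈ range (n + 1), HasDerivAt (fun y => Real.log (y + k)) (x + k)⁻¹ x :=
    fun k _ => by simpa using ((hasDerivAt_id x).add_const (k : ℝ)).log (by positivity)
  have := (((hasDerivAt_id x).mul_const (Real.log n)).add_const (Real.log n.factorial)).fun_sub
    (HasDerivAt.fun_sum hlog)
  simp only [id, one_mul] at this
  exact this

lemma log_sub_sum_inv_eq (n : ℕ) (x : ℝ) :
    Real.log n - ∑ k ∈ range (n + 1), (x + k)⁻¹
      = (Real.log n - harmonic (n + 1)) + ∑ k ∈ range (n + 1), digammaTerm k x := by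
  simp only [digammaTerm, harmonic, sum_sub_distrib]
  push_cast
  ring

lemma tendsto_log_sub_harmonic_succ :
    Tendsto (fun n : ℕ => Real.log n - harmonic (n + 1)) atTop
      (𝓝 (-Real.eulerMascheroniConstant)) := by
  have := Real.tendsto_harmonic_sub_log.neg.sub tendsto_one_div_add_atTop_nhds_zero_nat
  rw [sub_zero] at this
  refine this.congr fun n => ?_
  rw [harmonic_succ]
  push_cast
  ring

lemma hasDerivAt_log_Gamma {x : ℝ} (hx : 0 < x) :
    HasDerivAt (fun y => Real.log (Real.Gamma y))
      (-Real.eulerMascheroniConstant + ∑' k, digammaTerm k x) x := by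
  have hsum : TendstoUniformlyOn (fun n y => ∑ k ∈ range (n + 1), digammaTerm k y)
      (fun y => ∑' k, digammaTerm k y) atTop (Set.Ioo (x / 2) (2 * x)) := fun u hu =>
    (tendsto_add_atTop_nat 1).eventually <| (tendstoUniformlyOn_digammaTerm (half_pos hx)
      (by linarith)).mono Set.Ioo_subset_Icc_self u hu
  refine hasDerivAt_of_tendstoUniformlyOn isOpen_Ioo
    (((tendsto_log_sub_harmonic_succ.tendstoUniformlyOn_const _).fun_add hsum).congr ?_)
    (.of_forall fun n y hy => hasDerivAt_logGammaSeq n (by linarith [hy.1]))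
    (fun y hy => Real.BohrMollerup.tendsto_log_gamma (by linarith [hy.1]))
    ⟨half_lt_self hx, by linarith⟩
  exact .of_forall fun n y _ => (log_sub_sum_inv_eq n y).symm

lemma psi_eq_tsum_digammaTerm {x : ℝ} (hx : 0 < x) :
    psi x = -Real.eulerMascheroniConstant + ∑' k, digammaTerm k x :=
  (hasDerivAt_log_Gamma hx).deriv

lemma deriv_psi_eq_hurwitzSeries {t : ℝ} (ht : 0 < t) : deriv psi t = hurwitzSeries 2 t := by
  have : psi =ᶠ[𝓝 t] fun y => -Real.eulerMascheroniConstant + ∑' k, digammaTerm k y :=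
    eventually_of_mem (Ioi_mem_nhds ht) fun y hy => psi_eq_tsum_digammaTerm hy
  rw [this.deriv_eq]
  exact ((hasDerivAt_tsum_digammaTerm ht).const_add _).deriv

lemma pow_mul_pow_add_pow_mul_pow_le {u v : ℝ} (hu : 0 ≤ u) (hv : 0 ≤ v) (a b : ℕ) :
    u ^ a * v ^ b + u ^ b * v ^ a ≤ u ^ (a + b) + v ^ (a + b) := by
  have : 0 ≤ (u ^ a - v ^ a) * (u ^ b - v ^ b) := by
    rcases le_total u v with h | h
    · exact mul_nonneg_of_nonpos_of_nonpos (sub_nonpos.2 (pow_le_pow_left₀ hu h a))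
        (sub_nonpos.2 (pow_le_pow_left₀ hu h b))
    · exact mul_nonneg (sub_nonneg.2 (pow_le_pow_left₀ hv h a))
        (sub_nonneg.2 (pow_le_pow_left₀ hv h b))
  rw [pow_add, pow_add]
  linarith

lemma two_mul_sum_pow_mul_pow_le {u v : ℝ} (hu : 0 ≤ u) (hv : 0 ≤ v) (p : ℕ) :
    2 * ∑ i ∈ range p, u ^ (i + 1) * v ^ (p - i) ≤ p * (u ^ (p + 1) + v ^ (p + 1)) := by
  have hreflect : ∑ i ∈ range p, u ^ (i + 1) * v ^ (p - i)
      = ∑ i ∈ range p, u ^ (p - i) * v ^ (i + 1) := by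
    rw [← sum_range_reflect]
    refine sum_congr rfl fun i hi => ?_
    have := mem_range.1 hi
    congr 2 <;> omega
  calc 2 * ∑ i ∈ range p, u ^ (i + 1) * v ^ (p - i)
      = ∑ i ∈ range p, (u ^ (i + 1) * v ^ (p - i) + u ^ (p - i) * v ^ (i + 1)) := by
        rw [sum_add_distrib, ← hreflect, two_mul]
    _ ≤ ∑ _i ∈ range p, (u ^ (p + 1) + v ^ (p + 1)) := sum_le_sum fun i hi => by
        have := pow_mul_pow_add_pow_mul_pow_le hu hv (i + 1) (p - i)
        rwa [show i + 1 + (p - i) = p + 1 by have := mem_range.1 hi; omega] at this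
    _ = p * (u ^ (p + 1) + v ^ (p + 1)) := by rw [sum_const, card_range, nsmul_eq_mul]

/-- The trapezoid rule for the convex function `x ↦ (x ^ (p + 1))⁻¹` on `[a, a + 1]`. -/
lemma two_mul_inv_pow_sub_le {a : ℝ} (ha : 0 < a) (p : ℕ) :
    2 * ((a ^ p)⁻¹ - ((a + 1) ^ p)⁻¹) ≤ p * ((a ^ (p + 1))⁻¹ + ((a + 1) ^ (p + 1))⁻¹) := by
  have huv : a⁻¹ - (a + 1)⁻¹ = a⁻¹ * (a + 1)⁻¹ := by field_simp; ring
  have hgeom : a⁻¹ ^ p - (a + 1)⁻¹ ^ p = ∑ i ∈ range p, a⁻¹ ^ (i + 1) * (a + 1)⁻¹ ^ (p - i) := by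
    rw [← geom_sum₂_mul, huv, sum_mul]
    refine sum_congr rfl fun i hi => ?_
    rw [show p - i = p - 1 - i + 1 by have := mem_range.1 hi; omega]
    ring
  simp only [← inv_pow]
  rw [hgeom]
  exact two_mul_sum_pow_mul_pow_le (by positivity) (by positivity) p

lemma le_tsum_of_sub_succ_le {f g : ℕ → ℝ} (hf : Summable f) (hg : Tendsto g atTop (𝓝 0))
    (h : ∀ k, g k - g (k + 1) ≤ f k) : g 0 ≤ ∑' k, f k := by
  have hlim : Tendsto (fun n => g 0 - g n) atTop (𝓝 (g 0)) := by
    simpa using tendsto_const_nhds.sub hg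
  refine le_of_tendsto_of_tendsto' hlim hf.hasSum.tendsto_sum_nat fun n => ?_
  rw [← sum_range_sub']
  exact sum_le_sum fun k _ => h k

lemma tsum_le_of_le_sub_succ {f g : ℕ → ℝ} (hf : Summable f) (hg : Tendsto g atTop (𝓝 0))
    (h : ∀ k, f k ≤ g k - g (k + 1)) : ∑' k, f k ≤ g 0 := by
  have hlim : Tendsto (fun n => g 0 - g n) atTop (𝓝 (g 0)) := by
    simpa using tendsto_const_nhds.sub hg
  refine le_of_tendsto_of_tendsto' hf.hasSum.tendsto_sum_nat hlim fun n => ?_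
  rw [← sum_range_sub']
  exact sum_le_sum fun k _ => h k

lemma tendsto_inv_pow_add_natCast_nhds_zero {m : ℕ} (hm : m ≠ 0) (t : ℝ) :
    Tendsto (fun k : ℕ => ((t + k) ^ m)⁻¹) atTop (𝓝 0) :=
  ((tendsto_pow_atTop hm).comp
    (tendsto_atTop_add_const_left atTop t tendsto_natCast_atTop_atTop)).inv_tendsto_atTop

lemma inv_pow_div_two_add_le_hurwitzSeries (n : ℕ) {t : ℝ} (ht : 0 < t) :
    (t ^ (n + 2))⁻¹ / 2 + (t ^ (n + 1))⁻¹ / (n + 1) ≤ hurwitzSeries (n + 2) t := by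
  set g : ℕ → ℝ := fun k => ((t + k) ^ (n + 2))⁻¹ / 2 + ((t + k) ^ (n + 1))⁻¹ / (n + 1)
  have hg : Tendsto g atTop (𝓝 0) := by
    simpa using ((tendsto_inv_pow_add_natCast_nhds_zero (by omega) t).div_const 2).add
      ((tendsto_inv_pow_add_natCast_nhds_zero (by omega) t).div_const ((n : ℝ) + 1))
  have hstep (k : ℕ) : g k - g (k + 1) ≤ ((t + k) ^ (n + 2))⁻¹ := by
    have := two_mul_inv_pow_sub_le (a := t + k) (by positivity) (n + 1)
    push_cast at this
    simp only [g, show t + ((k + 1 : ℕ) : ℝ) = t + k + 1 by push_cast; ring]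
    generalize ((t + k) ^ (n + 1))⁻¹ = A, ((t + k + 1) ^ (n + 1))⁻¹ = A',
      ((t + k) ^ (n + 2))⁻¹ = B, ((t + k + 1) ^ (n + 2))⁻¹ = B' at this ⊢
    field_simp
    linarith
  simpa [g, hurwitzSeries] using
    le_tsum_of_sub_succ_le (summable_inv_pow_add (by omega) ht) hg hstep

lemma hurwitzSeries_two_le {t : ℝ} (ht : 0 < t) : hurwitzSeries 2 t ≤ (t ^ 2)⁻¹ + t⁻¹ := by
  set g : ℕ → ℝ := fun k => ((t + k) ^ 2)⁻¹ + (t + k)⁻¹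
  have hg : Tendsto g atTop (𝓝 0) := by
    simpa using (tendsto_inv_pow_add_natCast_nhds_zero two_ne_zero t).add
      (tendsto_inv_pow_add_natCast_nhds_zero one_ne_zero t)
  have hstep (k : ℕ) : ((t + k) ^ 2)⁻¹ ≤ g k - g (k + 1) := by
    have hk : 0 < t + k := by positivity
    simp only [g, show t + ((k + 1 : ℕ) : ℝ) = t + k + 1 by push_cast; ring]
    field_simp
    nlinarith
  simpa [g, hurwitzSeries] using tsum_le_of_le_sub_succ (summable_inv_pow_add le_rfl ht) hg hstep

lemma iteratedDeriv_eqOn_of_hasDerivAt {𝕜 F : Type*} [NontriviallyNormedField 𝕜]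
    [NormedAddCommGroup F] [NormedSpace 𝕜 F] {f : 𝕜 → F} {g : ℕ → 𝕜 → F} {U : Set 𝕜}
    (hU : IsOpen U) (h0 : Set.EqOn f (g 0) U)
    (hg : ∀ n, ∀ x ∈ U, HasDerivAt (g n) (g (n + 1) x) x) (n : ℕ) :
    Set.EqOn (iteratedDeriv n f) (g n) U := by
  induction n with
  | zero => simpa only [iteratedDeriv_zero] using h0
  | succ n ih =>
    intro x hx
    rw [iteratedDeriv_succ, (ih.eventuallyEq_of_mem (hU.mem_nhds hx)).deriv_eq]
    exact (hg n x hx).deriv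

noncomputable def theta (lam t : ℝ) : ℝ := deriv psi t - (1 + 2 * lam * t) / (2 * t ^ 2)

open scoped Nat in
noncomputable def signedIteratedDerivTheta (lam : ℝ) (n : ℕ) (t : ℝ) : ℝ :=
  (n + 1)! * (hurwitzSeries (n + 2) t - (t ^ (n + 2))⁻¹ / 2) - n ! * lam * (t ^ (n + 1))⁻¹

lemma hasDerivAt_signedIteratedDerivTheta (lam : ℝ) (n : ℕ) {t : ℝ} (ht : 0 < t) :
    HasDerivAt (signedIteratedDerivTheta lam n) (-signedIteratedDerivTheta lam (n + 1) t) t := by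
  have hpow : ∀ m : ℕ, HasDerivAt (fun y : ℝ => (y ^ (m + 1))⁻¹)
      (-((m : ℝ) + 1) * (t ^ (m + 2))⁻¹) t := fun m => by
    simpa using hasDerivAt_inv_pow_add m (c := 0) (by simpa using ht.ne')
  have := (((hasDerivAt_hurwitzSeries n ht).sub ((hpow (n + 1)).div_const 2)).const_mul
    ((n + 1).factorial : ℝ)).sub ((hpow n).const_mul ((n.factorial : ℝ) * lam))
  refine this.congr_deriv ?_
  simp only [signedIteratedDerivTheta, Nat.factorial_succ]
  push_cast
  ring

lemma iteratedDeriv_theta (lam : ℝ) (n : ℕ) {t : ℝ} (ht : 0 < t) :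
    iteratedDeriv n (theta lam) t = (-1) ^ n * signedIteratedDerivTheta lam n t := by
  refine iteratedDeriv_eqOn_of_hasDerivAt
    (g := fun n t => (-1) ^ n * signedIteratedDerivTheta lam n t) isOpen_Ioi
    (fun t (ht : 0 < t) => ?_) (fun n t (ht : 0 < t) => ?_) n ht
  · simp only [theta, signedIteratedDerivTheta, deriv_psi_eq_hurwitzSeries ht]
    field_simp
    ring
  · refine ((hasDerivAt_signedIteratedDerivTheta lam n ht).const_mul _).congr_deriv ?_
    ring

lemma signedIteratedDerivTheta_nonneg {lam : ℝ} (hlam : lam ≤ 1) (n : ℕ) {t : ℝ} (ht : 0 < t) :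
    0 ≤ signedIteratedDerivTheta lam n t := by
  have hH := inv_pow_div_two_add_le_hurwitzSeries n ht
  have hA : 0 < (t ^ (n + 1))⁻¹ := by positivity
  have hfac : 0 < (n.factorial : ℝ) := by positivity
  rw [signedIteratedDerivTheta, Nat.factorial_succ]
  push_cast
  generalize hurwitzSeries (n + 2) t = H, (t ^ (n + 1))⁻¹ = A, (t ^ (n + 2))⁻¹ = B at hH hA ⊢
  have h1 : A ≤ (n + 1) * (H - B / 2) := by
    rw [← div_le_iff₀' (by positivity)]
    linarith
  nlinarith [mul_le_mul_of_nonneg_left h1 hfac.le,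
    mul_le_mul_of_nonneg_right hlam (mul_pos hfac hA).le]

lemma signedIteratedDerivTheta_zero_neg {lam : ℝ} (hlam : 1 < lam) :
    signedIteratedDerivTheta lam 0 (lam - 1)⁻¹ < 0 := by
  have hH := hurwitzSeries_two_le (inv_pos.2 (sub_pos.2 hlam))
  simp only [signedIteratedDerivTheta, inv_pow, inv_inv] at hH ⊢
  norm_num
  nlinarith

end Trigamma

theorem theta_ss_completely_monotonic_iff (s lam : ℝ) :
    (∀ n : ℕ, ∀ x : ℝ, -s < x →
      0 ≤ (-1 : ℝ) ^ n *
        iteratedDeriv n (fun x : ℝ =>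
          deriv psi (x + s) - (1 + 2 * lam * (x + s)) / (2 * (x + s) ^ 2)) x) ↔
    lam ≤ 1 := by
  change (∀ n : ℕ, ∀ x : ℝ, -s < x →
    0 ≤ (-1 : ℝ) ^ n * iteratedDeriv n (fun x => Trigamma.theta lam (x + s)) x) ↔ lam ≤ 1
  have hsigned (n : ℕ) {x : ℝ} (hx : -s < x) :
      (-1 : ℝ) ^ n * iteratedDeriv n (fun x => Trigamma.theta lam (x + s)) x
        = Trigamma.signedIteratedDerivTheta lam n (x + s) := by
    simp only [iteratedDeriv_comp_add_const]
    rw [Trigamma.iteratedDeriv_theta lam n (by linarith), ← mul_assoc, ← mul_pow]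
    norm_num
  constructor
  · intro H
    by_contra! hlam
    have hpos : 0 < (lam - 1)⁻¹ := inv_pos.2 (sub_pos.2 hlam)
    have := H 0 ((lam - 1)⁻¹ - s) (by linarith)
    rw [hsigned 0 (by linarith), sub_add_cancel] at this
    exact (Trigamma.signedIteratedDerivTheta_zero_neg hlam).not_ge this
  · intro hlam n x hx
    rw [hsigned n hx]
    exact Trigamma.signedIteratedDerivTheta_nonneg hlam n (by linarith)
end

section
/- For positive real numbers a ≠ b with 0 < |b−a| < 1, the inequality [Γ(b)/Γ(a)]^{1/(b−a)} < √(ab) · (a/b)^{1/(2(b−a))} holds; for |b−a| > 1 the reversed inequality holds. -/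
/-!
Put `D(u) = log Γ(u) - log Γ(a) - (u - a)(log a + log u)/2 + (log u - log a)/2`. Then
`(b - a)` times the logarithm of the ratio of the two sides of the inequality is `D(b)`, so
everything comes down to the sign of `D(b)/(b - a)`, which is symmetric in `a` and `b`.
By the functional equation `D(a) = D(a + 1) = 0`, and `D` is strictly convex on `[a, ∞)`: it is
`log Γ(u) - ((u - 1/2) log u - u)` plus the function `(u + a)/2 · log u` (strictly convex for
`u > a`) plus an affine function. The first summand is convex because its unit differences
`(u + 1/2) log(1 + 1/u) - 1` are, and it is asymptotically constant along `u + n`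
(Gauss' product formula). A strictly convex function vanishing at `a` and `a + 1` is negative in
between and positive beyond `a + 1`.
-/

open Real Filter Set Topology

lemma strictConvexOn_of_hasDerivAt2_pos {D : Set ℝ} (hD : Convex ℝ D) {f f' f'' : ℝ → ℝ}
    (hf : ContinuousOn f D) (hf' : ∀ x ∈ interior D, HasDerivAt f (f' x) x)
    (hf'' : ∀ x ∈ interior D, HasDerivAt f' (f'' x) x)
    (hf''_pos : ∀ x ∈ interior D, 0 < f'' x) :
    StrictConvexOn ℝ D f := by
  refine strictConvexOn_of_deriv2_pos hD hf fun x hx => ?_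
  have hderiv : deriv f =ᶠ[𝓝 x] f' := by
    filter_upwards [isOpen_interior.mem_nhds hx] with y hy using (hf' y hy).deriv
  rw [Function.iterate_succ_apply, Function.iterate_one, hderiv.deriv_eq, (hf'' x hx).deriv]
  exact hf''_pos x hx

lemma convexOn_of_tendsto {ι E : Type*} [AddCommMonoid E] [Module ℝ E] {l : Filter ι} [l.NeBot]
    {s : Set E} {F : ι → E → ℝ} {f : E → ℝ} (hs : Convex ℝ s)
    (hF : ∀ᶠ i in l, ConvexOn ℝ s (F i)) (hlim : ∀ x ∈ s, Tendsto (fun i => F i x) l (𝓝 (f x))) :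
    ConvexOn ℝ s f := by
  refine ⟨hs, fun x hx y hy a b ha hb hab => ?_⟩
  refine le_of_tendsto_of_tendsto (hlim _ (hs hx hy ha hb hab))
    (((hlim x hx).const_smul a).add ((hlim y hy).const_smul b)) ?_
  filter_upwards [hF] with i hi using hi.2 hx hy ha hb hab

lemma convexOn_Ioi_of_convexOn_sub_add_one {f : ℝ → ℝ}
    (hconv : ConvexOn ℝ (Ioi 0) (fun x => f x - f (x + 1)))
    (hlim : ∀ x > 0, Tendsto (fun n : ℕ => f (n + x) - f n) atTop (𝓝 0)) :
    ConvexOn ℝ (Ioi 0) f := by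
  -- `f x - f (n + x)` telescopes into a sum of translates of the unit difference.
  have htelescope (n : ℕ) : ConvexOn ℝ (Ioi 0) (fun x => f x - f (n + x)) := by
    induction n with
    | zero => simpa using convexOn_const 0 (convex_Ioi (0 : ℝ))
    | succ n ih =>
      have hshift : ConvexOn ℝ (Ioi 0) (fun x => f (n + x) - f (n + x + 1)) :=
        (hconv.translate_right (n : ℝ)).subset (fun y (hy : 0 < y) => by
          simp only [mem_preimage, mem_Ioi]; positivity) (convex_Ioi 0)
      refine (ih.add hshift).congr fun x _ => ?_
      simp only [Pi.add_apply, Nat.cast_succ, add_right_comm _ (1 : ℝ)]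
      ring
  refine convexOn_of_tendsto (l := atTop) (F := fun (n : ℕ) x => f x - f (n + x) + f n)
    (convex_Ioi 0) (Eventually.of_forall fun n => (htelescope n).add_const _) fun x hx => ?_
  have := (hlim x hx).const_sub (f x)
  rw [sub_zero] at this
  exact this.congr fun n => by ring

section SignOfStrictConvex

variable {𝕜 : Type*} [Field 𝕜] [LinearOrder 𝕜] [IsStrictOrderedRing 𝕜] {s : Set 𝕜} {f : 𝕜 → 𝕜}
  {p q x : 𝕜}

lemma StrictConvexOn.neg_of_mem_Ioo_of_eq_zero (hf : StrictConvexOn 𝕜 s f) (hp : p ∈ s)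
    (hq : q ∈ s) (hfp : f p = 0) (hfq : f q = 0) (hx : x ∈ Ioo p q) : f x < 0 := by
  have hpq := hx.1.trans hx.2
  have := hf.lt_on_openSegment hp hq hpq.ne (by rwa [openSegment_eq_Ioo hpq])
  rwa [hfp, hfq, max_self] at this

lemma StrictConvexOn.pos_of_lt_of_eq_zero (hf : StrictConvexOn 𝕜 s f) (hp : p ∈ s) (hx : x ∈ s)
    (hfp : f p = 0) (hfq : f q = 0) (hpq : p < q) (hqx : q < x) : 0 < f x := by
  have := hf.slope_strict_mono_adjacent hp hx hpq hqx
  rwa [hfp, hfq, sub_zero, zero_div, sub_zero, div_pos_iff_of_pos_right (sub_pos.2 hqx)] at this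

end SignOfStrictConvex

lemma strictConvexOn_add_half_mul_log_add_one_sub_log :
    StrictConvexOn ℝ (Ioi 0) (fun x : ℝ => (x + 1 / 2) * (log (x + 1) - log x)) := by
  have hlog (x : ℝ) (hx : 0 < x) :
      HasDerivAt (fun x => log (x + 1) - log x) (1 / (x + 1) - 1 / x) x :=
    (((hasDerivAt_id' x).add_const 1).log (by positivity)).sub ((hasDerivAt_id' x).log hx.ne')
  refine strictConvexOn_of_hasDerivAt2_pos (convex_Ioi 0)
    (f' := fun x => log (x + 1) - log x - (x + 1 / 2) / (x * (x + 1)))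
    (f'' := fun x => 1 / (2 * x ^ 2 * (x + 1) ^ 2)) ?_ (fun x hx => ?_) (fun x hx => ?_)
    (fun x hx => ?_)
  · have : ∀ x ∈ Ioi (0 : ℝ), x ≠ 0 ∧ x + 1 ≠ 0 := fun x (hx : 0 < x) => ⟨hx.ne', by positivity⟩
    fun_prop (disch := first | exact fun x hx => (this x hx).1 | exact fun x hx => (this x hx).2)
  all_goals rw [interior_Ioi, mem_Ioi] at hx
  · refine (((hasDerivAt_id' x).add_const (1 / 2)).mul (hlog x hx)).congr_deriv ?_
    field_simp
    ring
  · have hrat := ((hasDerivAt_id' x).add_const (1 / 2)).div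
      ((hasDerivAt_id' x).mul ((hasDerivAt_id' x).add_const 1)) (mul_pos hx (by positivity)).ne'
    refine ((hlog x hx).sub hrat).congr_deriv ?_
    simp only [Pi.mul_apply]
    field_simp
    ring
  · positivity

lemma strictConvexOn_add_mul_log_div_two {a : ℝ} (ha : 0 < a) :
    StrictConvexOn ℝ (Ici a) (fun u => (u + a) * log u / 2) := by
  refine strictConvexOn_of_hasDerivAt2_pos (convex_Ici a)
    (f' := fun u => (log u + 1 + a / u) / 2) (f'' := fun u => (u - a) / (2 * u ^ 2)) ?_
    (fun u hu => ?_) (fun u hu => ?_) (fun u hu => ?_)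
  · refine ContinuousOn.div_const ?_ 2
    fun_prop (disch := exact fun u (hu : a ≤ u) => (ha.trans_le hu).ne')
  all_goals rw [interior_Ici, mem_Ioi] at hu
  all_goals have hu0 : u ≠ 0 := (ha.trans hu).ne'
  · refine ((((hasDerivAt_id' u).add_const a).mul
      ((hasDerivAt_id' u).log hu0)).div_const 2).congr_deriv ?_
    field_simp
    ring
  · refine ((((hasDerivAt_id' u).log hu0).add_const 1).add
      ((hasDerivAt_const u a).div (hasDerivAt_id' u) hu0)).div_const 2 |>.congr_deriv ?_
    field_simp
    ring
  · exact div_pos (sub_pos.2 hu) (by positivity)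

lemma tendsto_add_mul_log_add_sub_log (c x : ℝ) :
    Tendsto (fun y => (y + c) * (log (y + x) - log y)) atTop (𝓝 x) := by
  have h := (tendsto_mul_log_one_add_div_atTop x).add
    ((tendsto_log_comp_add_sub_log x).const_mul c)
  rw [mul_zero, add_zero] at h
  refine h.congr' ?_
  filter_upwards [eventually_gt_atTop 0, eventually_gt_atTop (-x)] with y hy hyx
  rw [← log_div (by linarith) hy.ne', add_div, div_self hy.ne', add_comm 1]
  ring

lemma log_Gamma_add_one {x : ℝ} (hx : 0 < x) : log (Gamma (x + 1)) = log (Gamma x) + log x := by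
  rw [Gamma_add_one hx.ne', log_mul hx.ne' (Gamma_pos_of_pos hx).ne', add_comm]

lemma tendsto_log_Gamma_nat_add_sub {x : ℝ} (hx : 0 < x) :
    Tendsto (fun n : ℕ => log (Gamma (n + x)) - log (Gamma n) - x * log n) atTop (𝓝 0) := by
  have hseq := (BohrMollerup.tendsto_log_gamma hx).const_sub (log (Gamma x))
  rw [sub_self] at hseq
  have hshift := hseq.sub (tendsto_log_nat_add_one_sub_log.const_mul x)
  rw [mul_zero, sub_zero] at hshift
  refine (tendsto_add_atTop_iff_nat 1).mp (hshift.congr fun n => ?_)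
  have hsum := BohrMollerup.f_add_nat_eq (f := log ∘ Gamma) (log_Gamma_add_one ·) hx (n + 1)
  simp only [Function.comp_apply] at hsum
  rw [BohrMollerup.logGammaSeq, ← Gamma_nat_eq_factorial]
  push_cast at hsum ⊢
  rw [add_comm _ x, hsum]
  ring

noncomputable def logGammaSubStirling (x : ℝ) : ℝ := log (Gamma x) - ((x - 1 / 2) * log x - x)

lemma logGammaSubStirling_sub_add_one {x : ℝ} (hx : 0 < x) :
    logGammaSubStirling x - logGammaSubStirling (x + 1) =
      (x + 1 / 2) * (log (x + 1) - log x) - 1 := by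
  simp only [logGammaSubStirling, log_Gamma_add_one hx]
  ring

lemma tendsto_logGammaSubStirling_nat_add_sub {x : ℝ} (hx : 0 < x) :
    Tendsto (fun n : ℕ => logGammaSubStirling (n + x) - logGammaSubStirling n) atTop (𝓝 0) := by
  have h := ((tendsto_log_Gamma_nat_add_sub hx).sub
    ((tendsto_add_mul_log_add_sub_log (x - 1 / 2) x).comp tendsto_natCast_atTop_atTop)).add_const x
  rw [zero_sub, neg_add_cancel] at h
  refine h.congr fun n => ?_
  simp only [logGammaSubStirling, Function.comp_apply]
  ring

lemma convexOn_logGammaSubStirling : ConvexOn ℝ (Ioi 0) logGammaSubStirling := by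
  refine convexOn_Ioi_of_convexOn_sub_add_one ?_
    fun x hx => tendsto_logGammaSubStirling_nat_add_sub hx
  refine (strictConvexOn_add_half_mul_log_add_one_sub_log.convexOn.add_const (-1)).congr
    fun x hx => ?_
  rw [Pi.add_apply, logGammaSubStirling_sub_add_one hx]
  ring

noncomputable def gammaRatioDefect (a b : ℝ) : ℝ :=
  log (Gamma b) - log (Gamma a) - (b - a) * (log a + log b) / 2 + (log b - log a) / 2

lemma gammaRatioDefect_self (a : ℝ) : gammaRatioDefect a a = 0 := by
  simp [gammaRatioDefect]

lemma gammaRatioDefect_add_one {a : ℝ} (ha : 0 < a) : gammaRatioDefect a (a + 1) = 0 := by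
  simp only [gammaRatioDefect, log_Gamma_add_one ha]
  ring

lemma gammaRatioDefect_swap (a b : ℝ) : gammaRatioDefect b a = -gammaRatioDefect a b := by
  simp only [gammaRatioDefect]
  ring

lemma strictConvexOn_gammaRatioDefect {a : ℝ} (ha : 0 < a) :
    StrictConvexOn ℝ (Ici a) (gammaRatioDefect a) := by
  have hsplit : gammaRatioDefect a = fun u => logGammaSubStirling u + (u + a) * log u / 2
      + (-(1 + log a / 2)) * u + (a * log a / 2 - log a / 2 - log (Gamma a)) := by
    ext u
    simp only [gammaRatioDefect, logGammaSubStirling]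
    ring
  have hstirling := convexOn_logGammaSubStirling.subset (Ici_subset_Ioi.2 ha) (convex_Ici a)
  rw [hsplit]
  exact ((hstirling.add_strictConvexOn (strictConvexOn_add_mul_log_div_two ha)).add_convexOn
    ((LinearMap.mulLeft ℝ _).convexOn (convex_Ici a))).add_const _

lemma gammaRatioDefect_neg {a b : ℝ} (ha : 0 < a) (hab : a < b) (hb : b < a + 1) :
    gammaRatioDefect a b < 0 :=
  (strictConvexOn_gammaRatioDefect ha).neg_of_mem_Ioo_of_eq_zero self_mem_Ici
    (mem_Ici.2 (by linarith)) (gammaRatioDefect_self a) (gammaRatioDefect_add_one ha) ⟨hab, hb⟩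

lemma gammaRatioDefect_pos {a b : ℝ} (ha : 0 < a) (hb : a + 1 < b) : 0 < gammaRatioDefect a b :=
  (strictConvexOn_gammaRatioDefect ha).pos_of_lt_of_eq_zero self_mem_Ici (mem_Ici.2 (by linarith))
    (gammaRatioDefect_self a) (gammaRatioDefect_add_one ha) (lt_add_one a) hb

lemma gammaRatioDefect_div_sub_symm (a b : ℝ) :
    gammaRatioDefect b a / (a - b) = gammaRatioDefect a b / (b - a) := by
  rw [gammaRatioDefect_swap, ← neg_sub b a, neg_div_neg_eq]

lemma gammaRatioDefect_div_sub_neg {a b : ℝ} (ha : 0 < a) (hb : 0 < b) (hab : a ≠ b)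
    (h1 : |b - a| < 1) : gammaRatioDefect a b / (b - a) < 0 := by
  wlog hlt : a < b generalizing a b
  · rw [← gammaRatioDefect_div_sub_symm]
    exact this hb ha hab.symm (by rwa [abs_sub_comm]) (hab.lt_or_gt.resolve_left hlt)
  rw [abs_of_pos (sub_pos.2 hlt)] at h1
  exact div_neg_of_neg_of_pos (gammaRatioDefect_neg ha hlt (by linarith)) (sub_pos.2 hlt)

lemma gammaRatioDefect_div_sub_pos {a b : ℝ} (ha : 0 < a) (hb : 0 < b) (h1 : 1 < |b - a|) :
    0 < gammaRatioDefect a b / (b - a) := by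
  wlog hlt : a < b generalizing a b
  · rw [← gammaRatioDefect_div_sub_symm]
    refine this hb ha (by rwa [abs_sub_comm]) (lt_of_le_of_ne (not_lt.1 hlt) ?_)
    rintro rfl
    norm_num at h1
  rw [abs_of_pos (sub_pos.2 hlt)] at h1
  exact div_pos (gammaRatioDefect_pos ha (by linarith)) (sub_pos.2 hlt)

lemma Gamma_div_Gamma_rpow_eq {a b : ℝ} (ha : 0 < a) (hb : 0 < b) (hab : a ≠ b) :
    (Gamma b / Gamma a) ^ (1 / (b - a)) =
      √(a * b) * (a / b) ^ (1 / (2 * (b - a))) * exp (gammaRatioDefect a b / (b - a)) := by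
  have hba : b - a ≠ 0 := sub_ne_zero.2 hab.symm
  rw [sqrt_eq_rpow, rpow_def_of_pos (div_pos (Gamma_pos_of_pos hb) (Gamma_pos_of_pos ha)),
    rpow_def_of_pos (mul_pos ha hb), rpow_def_of_pos (div_pos ha hb), ← exp_add, ← exp_add,
    log_div (Gamma_pos_of_pos hb).ne' (Gamma_pos_of_pos ha).ne', log_mul ha.ne' hb.ne',
    log_div ha.ne' hb.ne', gammaRatioDefect]
  congr 1
  field_simp
  ring

theorem gamma_ratio_sqrt_ineq (a b : ℝ) (ha : 0 < a) (hb : 0 < b) (hab : a ≠ b) :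
    (0 < |b - a| → |b - a| < 1 →
      (Real.Gamma b / Real.Gamma a) ^ (1 / (b - a)) <
        Real.sqrt (a * b) * (a / b) ^ (1 / (2 * (b - a)))) ∧
    (1 < |b - a| →
      Real.sqrt (a * b) * (a / b) ^ (1 / (2 * (b - a))) <
        (Real.Gamma b / Real.Gamma a) ^ (1 / (b - a))) := by
  have hrhs : 0 < √(a * b) * (a / b) ^ (1 / (2 * (b - a))) := by
    have := div_pos ha hb
    positivity
  rw [Gamma_div_Gamma_rpow_eq ha hb hab]
  exact ⟨fun _ h1 => mul_lt_of_lt_one_right hrhs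
      (exp_lt_one_iff.2 (gammaRatioDefect_div_sub_neg ha hb hab h1)),
    fun h1 => lt_mul_of_one_lt_right hrhs
      (one_lt_exp_iff.2 (gammaRatioDefect_div_sub_pos ha hb h1))⟩
end

section
/- For x > −1/2, the inequality [Γ(x+1)/Γ(x+1/2)]² < (x + 1/2)·√((x+1/2)/(x+1)) holds. -/
/-!
Put `a = x + 1/2`. Since `Γ(a + 1) = a Γ(a)`, the claim `Γ(a + 1/2)⁴ (a + 1/2) < a³ Γ(a)⁴`
is the strict log-convexity inequality `B(a + 1/2, 1/2)² < B(a, 1/2) B(a + 1, 1/2)` for the Beta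
function. With the weight `w(t) = t^(a-1) (1-t)^(-1/2)` on `(0, 1)` it reads
`(∫ w √t)² < (∫ w) (∫ w t)`, the Cauchy–Schwarz inequality, strict because `√t` is not
constant.
-/

open MeasureTheory Set ProbabilityTheory intervalIntegral

lemma ofReal_betaIntegrand {α β t : ℝ} (ht : t ∈ Icc (0 : ℝ) 1) :
    (t : ℂ) ^ ((α : ℂ) - 1) * (1 - (t : ℂ)) ^ ((β : ℂ) - 1) =
      ((t ^ (α - 1) * (1 - t) ^ (β - 1) : ℝ) : ℂ) := by
  rw [Complex.ofReal_mul, Complex.ofReal_cpow ht.1, Complex.ofReal_cpow (sub_nonneg.2 ht.2)]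
  push_cast
  rfl

lemma intervalIntegrable_betaIntegrand {α β : ℝ} (hα : 0 < α) (hβ : 0 < β) :
    IntervalIntegrable (fun t : ℝ ↦ t ^ (α - 1) * (1 - t) ^ (β - 1)) volume 0 1 := by
  refine (Complex.betaIntegral_convergent (u := α) (v := β) (by simpa) (by simpa)).norm.congr_uIoo
    fun t ht ↦ ?_
  rw [uIoo_of_le zero_le_one] at ht
  simp only [ofReal_betaIntegrand (Ioo_subset_Icc_self ht), Complex.norm_real, Real.norm_eq_abs]
  exact abs_of_nonneg
    (mul_nonneg (Real.rpow_nonneg ht.1.le _) (Real.rpow_nonneg (sub_pos.2 ht.2).le _))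

lemma beta_eq_intervalIntegral {α β : ℝ} (hα : 0 < α) (hβ : 0 < β) :
    beta α β = ∫ t in (0 : ℝ)..1, t ^ (α - 1) * (1 - t) ^ (β - 1) := by
  rw [beta_eq_betaIntegralReal α β hα hβ, Complex.betaIntegral,
    intervalIntegral.integral_congr fun t ht ↦
      ofReal_betaIntegrand (uIcc_of_le (zero_le_one' ℝ) ▸ ht),
    intervalIntegral.integral_ofReal, Complex.ofReal_re]

theorem sq_integral_mul_lt_of_injOn {w g : ℝ → ℝ} {a b : ℝ} (hab : a < b)
    (hw : ∀ t ∈ Ioo a b, 0 < w t) (hg : InjOn g (Ioo a b))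
    (hw_int : IntervalIntegrable w volume a b)
    (hwg_int : IntervalIntegrable (fun t ↦ w t * g t) volume a b)
    (hwg2_int : IntervalIntegrable (fun t ↦ w t * g t ^ 2) volume a b) :
    (∫ t in a..b, w t * g t) ^ 2 < (∫ t in a..b, w t) * ∫ t in a..b, w t * g t ^ 2 := by
  set A := ∫ t in a..b, w t
  set C := ∫ t in a..b, w t * g t
  set D := ∫ t in a..b, w t * g t ^ 2
  have hA : 0 < A := intervalIntegral_pos_of_pos_on hw_int hw hab
  -- the minimum point of the quadratic `s ↦ ∫ w (s - g)²`
  set s := C / A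
  have hexpand : (fun t ↦ w t * (s - g t) ^ 2) =
      fun t ↦ s ^ 2 * w t - 2 * s * (w t * g t) + w t * g t ^ 2 := by
    ext t; ring
  have hint : IntervalIntegrable (fun t ↦ w t * (s - g t) ^ 2) volume a b := by
    rw [hexpand]
    exact ((hw_int.const_mul _).sub (hwg_int.const_mul _)).add hwg2_int
  have hval : ∫ t in a..b, w t * (s - g t) ^ 2 = s ^ 2 * A - 2 * s * C + D := by
    rw [hexpand, intervalIntegral.integral_add ((hw_int.const_mul _).sub (hwg_int.const_mul _))
      hwg2_int, intervalIntegral.integral_sub (hw_int.const_mul _) (hwg_int.const_mul _),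
      intervalIntegral.integral_const_mul, intervalIntegral.integral_const_mul]
  have hnonneg : 0 ≤ᵐ[volume.restrict (uIoc a b)] fun t ↦ w t * (s - g t) ^ 2 := by
    rw [uIoc_of_le hab.le]
    refine ae_restrict_of_ae_eq_of_ae_restrict Ioo_ae_eq_Ioc ?_
    filter_upwards [ae_restrict_mem measurableSet_Ioo] with t ht
    exact mul_nonneg (hw t ht).le (sq_nonneg _)
  -- `s - g t` vanishes at most once on `(a, b)`, so the integrand is positive almost everywhere.
  have hsupp : Ioo a b \ (Ioo a b ∩ g ⁻¹' {s}) ⊆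
      Function.support (fun t ↦ w t * (s - g t) ^ 2) ∩ Ioc a b := by
    rintro t ⟨ht, hts⟩
    have hgt : s - g t ≠ 0 := sub_ne_zero.2 fun h ↦ hts ⟨ht, h.symm⟩
    exact ⟨mul_ne_zero (hw t ht).ne' (pow_ne_zero _ hgt), Ioo_subset_Ioc_self ht⟩
  have hnull : volume (Ioo a b ∩ g ⁻¹' {s}) = 0 :=
    Subsingleton.measure_zero (fun t ht u hu ↦ hg ht.1 hu.1 (ht.2.trans hu.2.symm)) _
  have hpos : 0 < ∫ t in a..b, w t * (s - g t) ^ 2 := by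
    rw [integral_pos_iff_support_of_nonneg_ae' hnonneg hint]
    refine ⟨hab, lt_of_lt_of_le ?_ (measure_mono hsupp)⟩
    rw [measure_sdiff_null hnull]
    exact (Measure.measure_Ioo_pos _).2 hab
  rw [hval] at hpos
  have hsA : s * A = C := div_mul_cancel₀ C hA.ne'
  nlinarith

theorem sq_beta_add_half_lt {α β : ℝ} (hα : 0 < α) (hβ : 0 < β) :
    beta (α + 1 / 2) β ^ 2 < beta α β * beta (α + 1) β := by
  set w : ℝ → ℝ := fun t ↦ t ^ (α - 1) * (1 - t) ^ (β - 1)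
  have hbeta_add {γ : ℝ} {g : ℝ → ℝ} (hγ : 0 < α + γ) (hg : ∀ t > 0, t ^ γ = g t) :
      IntervalIntegrable (fun t ↦ w t * g t) volume 0 1 ∧
        beta (α + γ) β = ∫ t in (0 : ℝ)..1, w t * g t := by
    have heq : (fun t : ℝ ↦ t ^ (α + γ - 1) * (1 - t) ^ (β - 1))
        =ᵐ[volume.restrict (uIoc 0 1)] fun t ↦ w t * g t := by
      rw [uIoc_of_le zero_le_one]
      exact ae_restrict_of_forall_mem measurableSet_Ioc fun t ht ↦ by
        simp only [w, show α + γ - 1 = α - 1 + γ by ring, Real.rpow_add ht.1, ← hg t ht.1]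
        ring
    exact ⟨(intervalIntegrable_betaIntegrand hγ hβ).congr_ae heq,
      (beta_eq_intervalIntegral hγ hβ).trans (integral_congr_ae_restrict heq)⟩
  obtain ⟨hint_half, hbeta_half⟩ := hbeta_add (g := Real.sqrt) (by linarith)
    fun t _ ↦ (Real.sqrt_eq_rpow t).symm
  obtain ⟨hint_one, hbeta_one⟩ :=
    hbeta_add (γ := 1) (g := fun t ↦ Real.sqrt t ^ 2) (by linarith) fun t ht ↦ by
      rw [Real.rpow_one, Real.sq_sqrt ht.le]
  rw [hbeta_half, hbeta_one, beta_eq_intervalIntegral hα hβ]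
  exact sq_integral_mul_lt_of_injOn zero_lt_one
    (fun t ht ↦
      mul_pos (Real.rpow_pos_of_pos ht.1 _) (Real.rpow_pos_of_pos (sub_pos.2 ht.2) _))
    (fun x hx y hy h ↦ (Real.sqrt_inj hx.1.le hy.1.le).1 h)
    (intervalIntegrable_betaIntegrand hα hβ) hint_half hint_one

theorem Gamma_add_half_div_Gamma_pow_four_mul_lt {a : ℝ} (ha : 0 < a) :
    (Real.Gamma (a + 1 / 2) / Real.Gamma a) ^ 4 * (a + 1 / 2) < a ^ 3 := by
  have h := sq_beta_add_half_lt ha one_half_pos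
  simp only [beta] at h
  rw [show a + 1 / 2 + 1 / 2 = a + 1 by ring, show a + 1 + 1 / 2 = (a + 1 / 2) + 1 by ring,
    Real.Gamma_add_one ha.ne', Real.Gamma_add_one (by positivity)] at h
  have hG := Real.Gamma_pos_of_pos ha
  have hH := Real.Gamma_pos_of_pos (by positivity : 0 < a + 1 / 2)
  have hc := Real.Gamma_pos_of_pos one_half_pos
  -- abstracted so that `field_simp` leaves the argument `a + 1 / 2` alone
  set G := Real.Gamma a
  set H := Real.Gamma (a + 1 / 2)
  rw [div_pow, div_mul_eq_mul_div, div_lt_iff₀ (by positivity)]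
  field_simp at h
  linarith

theorem gamma_ratio_watson_refinement (x : ℝ) (hx : -1 / 2 < x) :
    (Real.Gamma (x + 1) / Real.Gamma (x + 1 / 2)) ^ 2 <
      (x + 1 / 2) * Real.sqrt ((x + 1 / 2) / (x + 1)) := by
  have ha : 0 < x + 1 / 2 := by linarith
  have h := Gamma_add_half_div_Gamma_pow_four_mul_lt ha
  rw [show x + 1 / 2 + 1 / 2 = x + 1 by ring] at h
  refine lt_of_pow_lt_pow_left₀ 2 (by positivity) ?_
  rw [mul_pow, Real.sq_sqrt (div_nonneg ha.le (by linarith)), ← pow_mul, ← mul_div_assoc,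
    lt_div_iff₀ (by linarith)]
  linear_combination h
end
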